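/- arXiv:2108.11133 — 2 statements merged into one kernel-verified Lean document; each statement's English description precedes it below -/
import Mathlib

section
/- Let 1 < q < p < ∞, let Ω₀ = (0,2π) × (0,R), and let ω ∈ C¹(closure of Ω₀). Let φ : ℝ → ℝ be continuous, 2π-periodic, nonnegative with ε‖φ‖_∞ < R. Then (∫₀^{2π} |ω(x, εφ(x/ε)) − ω(x,0)|^q dx)^{1/q} ≤ (2π)^{(p−q)/(pq)} · ‖φ‖_∞^{(p−1)/p} · ε^{(p−1)/p} · ‖∇ω‖_{L^p(S_ε)}, where S_ε = {(x,y) : 0 < x < 2π, 0 < y < εφ(x/ε)}. -/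
open MeasureTheory Real Set
open scoped ENNReal

/-! Along the vertical segment from `(x, 0)` to `(x, b x)`, `b x = ε φ (x / ε)`, the fundamental
theorem of calculus bounds `|ω (x, b x) - ω (x, 0)|` by `∫₀^{b x} ‖Dω (x, y)‖ dy`, and Hölder on
`(0, b x)` bounds this by `(ε M)^{1 - 1/p}` times the `L^p` norm of `Dω` on the fiber over `x`.
Taking the `L^q` norm in `x`, Hölder on `(0, 2π)` with exponent `p / q` costs `(2π)^{1/q - 1/p}`,
and Tonelli identifies the `L^p` norm in `x` of the fiber norms with `‖Dω‖_{L^p(S_ε)}`. -/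

section RegionBetween

variable {α : Type*} {a b : α → ℝ} {s : Set α}

lemma lintegral_indicator_regionBetween_apply {x : α} (hx : x ∈ s) (F : α × ℝ → ℝ≥0∞) :
    ∫⁻ y, (regionBetween a b s).indicator F (x, y) = ∫⁻ y in Ioo (a x) (b x), F (x, y) := by
  rw [← lintegral_indicator measurableSet_Ioo]
  congr 1 with y
  by_cases hy : y ∈ Ioo (a x) (b x)
  · rw [indicator_of_mem hy, indicator_of_mem (show (x, y) ∈ regionBetween a b s from ⟨hx, hy⟩)]
  · rw [indicator_of_notMem hy, indicator_of_notMem fun h => hy h.2]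

variable [MeasurableSpace α] {μ : Measure α}

lemma aemeasurable_lintegral_Ioo_of_regionBetween (ha : Measurable a) (hb : Measurable b)
    (hs : MeasurableSet s) {F : α × ℝ → ℝ≥0∞}
    (hF : AEMeasurable F ((μ.prod volume).restrict (regionBetween a b s))) :
    AEMeasurable (fun x => ∫⁻ y in Ioo (a x) (b x), F (x, y)) (μ.restrict s) := by
  have hind := (aemeasurable_indicator_iff (measurableSet_regionBetween ha hb hs)).2 hF
  refine (hind.lintegral_prod_right'.mono_measure Measure.restrict_le_self).congr ?_
  filter_upwards [ae_restrict_mem hs] with x hx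
  exact lintegral_indicator_regionBetween_apply hx F

lemma setLIntegral_regionBetween [SFinite μ] (ha : Measurable a) (hb : Measurable b)
    (hs : MeasurableSet s) {F : α × ℝ → ℝ≥0∞}
    (hF : AEMeasurable F ((μ.prod volume).restrict (regionBetween a b s))) :
    ∫⁻ z in regionBetween a b s, F z ∂(μ.prod volume) =
      ∫⁻ x in s, (∫⁻ y in Ioo (a x) (b x), F (x, y)) ∂μ := by
  have hR := measurableSet_regionBetween ha hb hs
  rw [← lintegral_indicator hR, lintegral_prod _ ((aemeasurable_indicator_iff hR).2 hF),
    ← lintegral_indicator hs]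
  congr 1 with x
  by_cases hx : x ∈ s
  · rw [indicator_of_mem hx, lintegral_indicator_regionBetween_apply hx]
  · rw [indicator_of_notMem hx]
    simp [indicator_of_notMem fun h : (x, _) ∈ regionBetween a b s => hx h.1]

end RegionBetween

lemma lintegral_enorm_Ioo_le_eLpNorm' {E : Type*} [NormedAddCommGroup E] {g : ℝ → E} {a b p : ℝ}
    (hp : 1 ≤ p) (hg : AEStronglyMeasurable g (volume.restrict (Ioo a b))) :
    ∫⁻ y in Ioo a b, ‖g y‖ₑ ≤
      eLpNorm' g p (volume.restrict (Ioo a b)) * ENNReal.ofReal (b - a) ^ (1 - 1 / p) := by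
  have h := eLpNorm'_le_eLpNorm'_mul_rpow_measure_univ one_pos hp hg
  simpa [eLpNorm'_eq_lintegral_enorm] using h

lemma enorm_sub_le_lintegral_enorm_deriv {F : Type*} [NormedAddCommGroup F] [NormedSpace ℝ F]
    [CompleteSpace F] {u u' : ℝ → F} {a b : ℝ} (hab : a ≤ b) (hu : ContinuousOn u (Icc a b))
    (hderiv : ∀ y ∈ Ioo a b, HasDerivAt u (u' y) y) (hint : IntervalIntegrable u' volume a b) :
    ‖u b - u a‖ₑ ≤ ∫⁻ y in Ioo a b, ‖u' y‖ₑ := by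
  rw [← intervalIntegral.integral_eq_sub_of_hasDerivAt_of_le hab hu hderiv hint,
    intervalIntegral.integral_of_le hab, Measure.restrict_congr_set Ioo_ae_eq_Ioc.symm]
  exact enorm_integral_le_lintegral_enorm _

lemma eLpNorm'_le_mul_eLpNorm'_regionBetween {α E F : Type*} [MeasurableSpace α]
    [NormedAddCommGroup E] [NormedAddCommGroup F] {μ : Measure α} [SFinite μ]
    {a b : α → ℝ} {s : Set α} {f : α → E} {G : α × ℝ → F} {p q H : ℝ}
    (ha : Measurable a) (hb : Measurable b) (hs : MeasurableSet s)
    (hq : 0 < q) (hqp : q ≤ p) (hp : 1 ≤ p) (hH : ∀ x ∈ s, b x - a x ≤ H)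
    (hG : AEStronglyMeasurable G ((μ.prod volume).restrict (regionBetween a b s)))
    (hG_fiber : ∀ x ∈ s,
      AEStronglyMeasurable (fun y => G (x, y)) (volume.restrict (Ioo (a x) (b x))))
    (hf : ∀ x ∈ s, ‖f x‖ₑ ≤ ∫⁻ y in Ioo (a x) (b x), ‖G (x, y)‖ₑ) :
    eLpNorm' f q (μ.restrict s) ≤ μ s ^ (1 / q - 1 / p) * ENNReal.ofReal H ^ (1 - 1 / p) *
      eLpNorm' G p ((μ.prod volume).restrict (regionBetween a b s)) := by
  set Ψ : α → ℝ≥0∞ := fun x => eLpNorm' (fun y => G (x, y)) p (volume.restrict (Ioo (a x) (b x)))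
  have hp0 : p ≠ 0 := by positivity
  have hΨ_meas : AEStronglyMeasurable Ψ (μ.restrict s) :=
    ((aemeasurable_lintegral_Ioo_of_regionBetween ha hb hs
      (hG.enorm.pow_const p)).pow_const (1 / p)).aestronglyMeasurable
  have hfΨ : ∀ᵐ x ∂μ.restrict s, ‖f x‖ₑ ≤ ENNReal.ofReal H ^ (1 - 1 / p) * ‖Ψ x‖ₑ := by
    filter_upwards [ae_restrict_mem hs] with x hx
    have hp' : 0 ≤ 1 - 1 / p := by
      rw [sub_nonneg, div_le_one (by positivity)]; exact hp
    calc ‖f x‖ₑ ≤ ∫⁻ y in Ioo (a x) (b x), ‖G (x, y)‖ₑ := hf x hx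
      _ ≤ Ψ x * ENNReal.ofReal (b x - a x) ^ (1 - 1 / p) :=
        lintegral_enorm_Ioo_le_eLpNorm' hp (hG_fiber x hx)
      _ ≤ Ψ x * ENNReal.ofReal H ^ (1 - 1 / p) := by gcongr; exact hH x hx
      _ = _ := by rw [enorm_eq_self, mul_comm]
  have hΨ_p : eLpNorm' Ψ p (μ.restrict s) =
      eLpNorm' G p ((μ.prod volume).restrict (regionBetween a b s)) := by
    rw [eLpNorm'_eq_lintegral_enorm, eLpNorm'_eq_lintegral_enorm,
      setLIntegral_regionBetween ha hb hs (hG.enorm.pow_const p)]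
    congr 1
    refine lintegral_congr fun x => ?_
    simp only [Ψ, enorm_eq_self]
    rw [eLpNorm'_eq_lintegral_enorm, ← ENNReal.rpow_mul, one_div_mul_cancel hp0,
      ENNReal.rpow_one]
  calc eLpNorm' f q (μ.restrict s)
      ≤ ENNReal.ofReal H ^ (1 - 1 / p) * eLpNorm' Ψ q (μ.restrict s) :=
        eLpNorm'_le_mul_eLpNorm'_of_ae_le_mul hΨ_meas hfΨ hq
    _ ≤ ENNReal.ofReal H ^ (1 - 1 / p) *
        (eLpNorm' Ψ p (μ.restrict s) * μ.restrict s univ ^ (1 / q - 1 / p)) := by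
        gcongr; exact eLpNorm'_le_eLpNorm'_mul_rpow_measure_univ hq hqp hΨ_meas
    _ = _ := by rw [hΨ_p, Measure.restrict_apply_univ]; ring

lemma enorm_sub_le_lintegral_enorm_fderivWithin {E F : Type*} [NormedAddCommGroup E]
    [NormedSpace ℝ E] [NormedAddCommGroup F] [NormedSpace ℝ F] [CompleteSpace F]
    {ω : E × ℝ → F} {K : Set (E × ℝ)} (hω : ContDiffOn ℝ 1 ω K) (hK : UniqueDiffOn ℝ K)
    {x : E} {a b : ℝ} (hab : a ≤ b) (hseg : ∀ y ∈ Icc a b, (x, y) ∈ K)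
    (hint : ∀ y ∈ Ioo a b, (x, y) ∈ interior K) :
    ‖ω (x, b) - ω (x, a)‖ₑ ≤ ∫⁻ y in Ioo a b, ‖fderivWithin ℝ ω K (x, y)‖ₑ := by
  have hD : ContinuousOn (fun y => fderivWithin ℝ ω K (x, y)) (Icc a b) :=
    (hω.continuousOn_fderivWithin hK le_rfl).comp (by fun_prop) hseg
  have hderiv : ∀ y ∈ Ioo a b,
      HasDerivAt (fun y => ω (x, y)) (fderivWithin ℝ ω K (x, y) (0, 1)) y := fun y hy =>
    (((hω.differentiableOn one_ne_zero) _ (hseg y (Ioo_subset_Icc_self hy))).hasFDerivWithinAt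
      |>.hasFDerivAt (mem_interior_iff_mem_nhds.1 (hint y hy))).comp_hasDerivAt y
      ((hasDerivAt_const y x).prodMk (hasDerivAt_id y))
  have hunit : ‖((0, 1) : E × ℝ)‖ₑ ≤ 1 := by rw [← ofReal_norm]; simp
  calc ‖ω (x, b) - ω (x, a)‖ₑ ≤ ∫⁻ y in Ioo a b, ‖fderivWithin ℝ ω K (x, y) (0, 1)‖ₑ :=
        enorm_sub_le_lintegral_enorm_deriv hab (hω.continuousOn.comp (by fun_prop) hseg) hderiv
          ((hD.clm_apply continuousOn_const).intervalIntegrable_of_Icc hab)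
    _ ≤ ∫⁻ y in Ioo a b, ‖fderivWithin ℝ ω K (x, y)‖ₑ :=
        lintegral_mono fun y => (ContinuousLinearMap.le_opENorm_of_le _ hunit).trans_eq (mul_one _)

lemma toReal_eLpNorm' {α E : Type*} [MeasurableSpace α] [NormedAddCommGroup E] {μ : Measure α}
    {f : α → E} {q : ℝ} (hf : AEStronglyMeasurable f μ) (hq : 0 ≤ q) :
    (eLpNorm' f q μ).toReal = (∫ x, ‖f x‖ ^ q ∂μ) ^ (1 / q) := by
  rw [eLpNorm'_eq_lintegral_enorm, ← ENNReal.toReal_rpow,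
    integral_eq_lintegral_of_nonneg_ae (ae_of_all _ fun _ => by positivity)
      (hf.norm.aemeasurable.pow_const q).aestronglyMeasurable]
  congr 2
  refine lintegral_congr fun x => ?_
  rw [← ENNReal.ofReal_rpow_of_nonneg (norm_nonneg _) hq, ofReal_norm]

lemma eLpNorm'_restrict_lt_top_of_continuousOn {α E : Type*} [TopologicalSpace α] [T2Space α]
    [MeasurableSpace α] [OpensMeasurableSpace α] [NormedAddCommGroup E] {μ : Measure α}
    [IsFiniteMeasureOnCompacts μ] {f : α → E} {K S : Set α} {q : ℝ} (hK : IsCompact K)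
    (hf : ContinuousOn f K) (hSK : S ⊆ K) (hq : 0 < q) :
    eLpNorm' f q (μ.restrict S) < ∞ := by
  have hint : IntegrableOn (fun x => ‖f x‖ ^ q) S μ :=
    ((hf.norm.rpow_const fun _ _ => Or.inr hq.le).integrableOn_compact hK).mono_set hSK
  have hfin := (hasFiniteIntegral_iff_ofReal (ae_of_all _ fun _ => by positivity)).1 hint.2
  rw [eLpNorm'_eq_lintegral_enorm]
  refine ENNReal.rpow_lt_top_of_nonneg (by positivity) (ne_of_lt ?_)
  simpa only [← ENNReal.ofReal_rpow_of_nonneg (norm_nonneg _) hq.le, ofReal_norm] using hfin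

lemma regionBetween_zero_subset_Icc_prod {b : ℝ → ℝ} {L R : ℝ} (hbR : ∀ x, b x ≤ R) :
    regionBetween 0 b (Ioo 0 L) ⊆ Icc 0 L ×ˢ Icc 0 R := fun z hz =>
  ⟨Ioo_subset_Icc_self hz.1, hz.2.1.le, (hz.2.2.trans_le (hbR z.1)).le⟩

lemma eLpNorm'_graph_sub_base_le {F : Type*} [NormedAddCommGroup F] [NormedSpace ℝ F]
    [CompleteSpace F] {ω : ℝ × ℝ → F} {b : ℝ → ℝ} {L R H p q : ℝ} (hL : 0 < L) (hR : 0 < R)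
    (hω : ContDiffOn ℝ 1 ω (Icc 0 L ×ˢ Icc 0 R)) (hb : Measurable b) (hb0 : ∀ x, 0 ≤ b x)
    (hbH : ∀ x, b x ≤ H) (hbR : ∀ x, b x ≤ R) (hq : 0 < q) (hqp : q ≤ p) (hp : 1 ≤ p) :
    eLpNorm' (fun x => ω (x, b x) - ω (x, 0)) q (volume.restrict (Ioo 0 L)) ≤
      ENNReal.ofReal L ^ (1 / q - 1 / p) * ENNReal.ofReal H ^ (1 - 1 / p) *
        eLpNorm' (fderivWithin ℝ ω (Icc 0 L ×ˢ Icc 0 R)) p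
          (volume.restrict (regionBetween 0 b (Ioo 0 L))) := by
  set K := Icc 0 L ×ˢ Icc 0 R
  have hK : UniqueDiffOn ℝ K := (uniqueDiffOn_Icc hL).prod (uniqueDiffOn_Icc hR)
  have hDω : ContinuousOn (fderivWithin ℝ ω K) K := hω.continuousOn_fderivWithin hK le_rfl
  have hseg : ∀ x ∈ Ioo 0 L, ∀ y ∈ Icc 0 (b x), (x, y) ∈ K := fun x hx y hy =>
    ⟨Ioo_subset_Icc_self hx, hy.1, hy.2.trans (hbR x)⟩
  have hint : ∀ x ∈ Ioo 0 L, ∀ y ∈ Ioo 0 (b x), (x, y) ∈ interior K := fun x hx y hy => by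
    rw [interior_prod_eq, interior_Icc, interior_Icc]
    exact ⟨hx, hy.1, hy.2.trans_le (hbR x)⟩
  have h := eLpNorm'_le_mul_eLpNorm'_regionBetween (μ := volume)
    (f := fun x => ω (x, b x) - ω (x, 0)) (G := fderivWithin ℝ ω K) (H := H)
    measurable_const hb measurableSet_Ioo hq hqp hp
    (fun x _ => (sub_zero (b x)).trans_le (hbH x))
    ((hDω.mono (regionBetween_zero_subset_Icc_prod hbR)).aestronglyMeasurable
      (measurableSet_regionBetween measurable_const hb measurableSet_Ioo))
    (fun x hx => ((hDω.comp (by fun_prop) fun y hy => hseg x hx y (Ioo_subset_Icc_self hy))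
      |>.aestronglyMeasurable measurableSet_Ioo))
    (fun x hx => enorm_sub_le_lintegral_enorm_fderivWithin hω hK (hb0 x) (hseg x hx) (hint x hx))
  rwa [Real.volume_Ioo, sub_zero, ← Measure.volume_eq_prod] at h

lemma integral_norm_graph_sub_base_rpow_le {F : Type*} [NormedAddCommGroup F] [NormedSpace ℝ F]
    [CompleteSpace F] {ω : ℝ × ℝ → F} {b : ℝ → ℝ} {L R H p q : ℝ} (hL : 0 < L) (hR : 0 < R)
    (hω : ContDiffOn ℝ 1 ω (Icc 0 L ×ˢ Icc 0 R)) (hb : Continuous b) (hb0 : ∀ x, 0 ≤ b x)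
    (hbH : ∀ x, b x ≤ H) (hbR : ∀ x, b x ≤ R) (hq : 0 < q) (hqp : q ≤ p) (hp : 1 ≤ p) :
    (∫ x in Ioo 0 L, ‖ω (x, b x) - ω (x, 0)‖ ^ q) ^ (1 / q) ≤
      L ^ (1 / q - 1 / p) * H ^ (1 - 1 / p) *
        (∫ z in regionBetween 0 b (Ioo 0 L),
          ‖fderivWithin ℝ ω (Icc 0 L ×ˢ Icc 0 R) z‖ ^ p) ^ (1 / p) := by
  set K := Icc 0 L ×ˢ Icc 0 R
  have hRK := regionBetween_zero_subset_Icc_prod (L := L) hbR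
  have hDω : ContinuousOn (fderivWithin ℝ ω K) K :=
    hω.continuousOn_fderivWithin ((uniqueDiffOn_Icc hL).prod (uniqueDiffOn_Icc hR)) le_rfl
  have hΔ : ContinuousOn (fun x => ω (x, b x) - ω (x, 0)) (Icc 0 L) :=
    (hω.continuousOn.comp (by fun_prop) fun x hx => ⟨hx, hb0 x, hbR x⟩).sub
      (hω.continuousOn.comp (by fun_prop) fun x hx => ⟨hx, le_rfl, hR.le⟩)
  have hD : AEStronglyMeasurable (fderivWithin ℝ ω K)
      (volume.restrict (regionBetween 0 b (Ioo 0 L))) :=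
    (hDω.mono hRK).aestronglyMeasurable
      (measurableSet_regionBetween measurable_const hb.measurable measurableSet_Ioo)
  have hfin := eLpNorm'_restrict_lt_top_of_continuousOn (μ := volume) (q := p)
    (isCompact_Icc.prod isCompact_Icc) hDω hRK (by linarith)
  have hH : 0 ≤ H := (hb0 0).trans (hbH 0)
  have hexp : 0 ≤ 1 / q - 1 / p := sub_nonneg.2 (one_div_le_one_div_of_le hq hqp)
  have hexp' : 0 ≤ 1 - 1 / p := by
    rw [sub_nonneg, div_le_one (by linarith)]; exact hp
  rw [← toReal_eLpNorm' ((hΔ.mono Ioo_subset_Icc_self).aestronglyMeasurable measurableSet_Ioo)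
    hq.le, ← toReal_eLpNorm' hD (by linarith)]
  refine (ENNReal.toReal_mono ?_ (eLpNorm'_graph_sub_base_le hL hR hω hb.measurable hb0 hbH hbR
    hq hqp hp)).trans_eq ?_
  · exact ENNReal.mul_ne_top (ENNReal.mul_ne_top
      (ENNReal.rpow_ne_top_of_nonneg hexp ENNReal.ofReal_ne_top)
      (ENNReal.rpow_ne_top_of_nonneg hexp' ENNReal.ofReal_ne_top)) hfin.ne
  · simp only [ENNReal.toReal_mul, ← ENNReal.toReal_rpow, ENNReal.toReal_ofReal hL.le,
      ENNReal.toReal_ofReal hH, K]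

theorem stmt2_general (p q R ε M : ℝ) (hq : 1 < q) (hqp : q < p)
    (φ : ℝ → ℝ) (hφc : Continuous φ)
    (hpos : ∀ x, 0 ≤ φ x) (hM : ∀ x, φ x ≤ M) (hε : 0 < ε) (hεR : ε * M < R)
    (ω : ℝ × ℝ → ℝ)
    (hω : ContDiffOn ℝ 1 ω (closure (Set.Ioo 0 (2 * π) ×ˢ Set.Ioo 0 R))) :
    (∫ x in (0 : ℝ)..(2 * π), |ω (x, ε * φ (x / ε)) - ω (x, 0)| ^ q) ^ (1 / q) ≤
      (2 * π) ^ ((p - q) / (p * q)) * M ^ ((p - 1) / p) * ε ^ ((p - 1) / p) *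
        (∫ z in {z : ℝ × ℝ | 0 < z.1 ∧ z.1 < 2 * π ∧ 0 < z.2 ∧ z.2 < ε * φ (z.1 / ε)},
          ‖fderivWithin ℝ ω (closure (Set.Ioo 0 (2 * π) ×ˢ Set.Ioo 0 R)) z‖ ^ p) ^ (1 / p) := by
  have hL : 0 < 2 * π := by positivity
  have hR : 0 < R := (mul_nonneg hε.le ((hpos 0).trans (hM 0))).trans_lt hεR
  set b : ℝ → ℝ := fun x => ε * φ (x / ε)
  have hbH : ∀ x, b x ≤ ε * M := fun x => mul_le_mul_of_nonneg_left (hM _) hε.le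
  have hS : {z : ℝ × ℝ | 0 < z.1 ∧ z.1 < 2 * π ∧ 0 < z.2 ∧ z.2 < ε * φ (z.1 / ε)} =
      regionBetween 0 b (Ioo 0 (2 * π)) := by
    ext z; simp [regionBetween, b, and_assoc]
  rw [closure_prod_eq, closure_Ioo hL.ne, closure_Ioo hR.ne] at hω ⊢
  have key := integral_norm_graph_sub_base_rpow_le hL hR hω (by fun_prop)
    (fun x => mul_nonneg hε.le (hpos _)) hbH (fun x => (hbH x).trans hεR.le) (by linarith)
    hqp.le (by linarith)
  simp only [Real.norm_eq_abs] at key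
  rw [hS, intervalIntegral.integral_of_le hL.le, integral_Ioc_eq_integral_Ioo]
  refine key.trans_eq ?_
  have hM0 : 0 ≤ M := (hpos 0).trans (hM 0)
  have hp : p ≠ 0 := by linarith
  have hq0 : q ≠ 0 := by linarith
  have e1 : 1 / q - 1 / p = (p - q) / (p * q) := by field_simp
  have e2 : 1 - 1 / p = (p - 1) / p := by field_simp
  rw [e1, e2, Real.mul_rpow hε.le hM0]
  ring

/-- Trace-type oscillation estimate: for 1 < q < p, ω ∈ C¹(closure Ω₀) with
Ω₀ = (0,2π)×(0,R), and φ continuous 2π-periodic nonnegative bounded by M with εM < R,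
(∫₀^{2π} |ω(x,εφ(x/ε)) − ω(x,0)|^q dx)^{1/q}
  ≤ (2π)^{(p−q)/(pq)} · M^{(p−1)/p} · ε^{(p−1)/p} · ‖∇ω‖_{L^p(S_ε)}. -/
theorem stmt2 (p q R ε M : ℝ) (hq : 1 < q) (hqp : q < p)
    (φ : ℝ → ℝ) (hφc : Continuous φ) (hper : Function.Periodic φ (2 * π))
    (hpos : ∀ x, 0 ≤ φ x) (hM : ∀ x, φ x ≤ M) (hε : 0 < ε) (hεR : ε * M < R)
    (ω : ℝ × ℝ → ℝ)
    (hω : ContDiffOn ℝ 1 ω (closure (Set.Ioo 0 (2 * π) ×ˢ Set.Ioo 0 R))) :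
    (∫ x in (0 : ℝ)..(2 * π), |ω (x, ε * φ (x / ε)) - ω (x, 0)| ^ q) ^ (1 / q) ≤
      (2 * π) ^ ((p - q) / (p * q)) * M ^ ((p - 1) / p) * ε ^ ((p - 1) / p) *
        (∫ z in {z : ℝ × ℝ | 0 < z.1 ∧ z.1 < 2 * π ∧ 0 < z.2 ∧ z.2 < ε * φ (z.1 / ε)},
          ‖fderivWithin ℝ ω (closure (Set.Ioo 0 (2 * π) ×ˢ Set.Ioo 0 R)) z‖ ^ p) ^ (1 / p) :=
  stmt2_general p q R ε M hq hqp φ hφc hpos hM hε hεR ω hω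
end

section
/- Let μ be a probability measure supported on ν + ν^⊥ for ν ∈ 𝕊² ⊂ ℝ³, let s₀ > 0, set W = ∫ |v| dμ(v) and define the 3×3 symmetric traceless matrix Q_ef = (s₀/W) ∫ ((v⊗v)/|v|² − I/3) |v| dμ(v). Then for every convex, rotation-invariant function f : Sym₀(3) → ℝ (i.e. f(RQRᵀ)=f(Q) for all rotations R), f(Q_ef) ≤ f(s₀(e⊗e − I/3)) for any unit vector e. In particular λ_max(Q_ef) ≤ 2s₀/3, λ_min(Q_ef) ≥ −s₀/3, and |Q_ef| ≤ s₀√(2/3). -/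
/-!
Reweighting `μ` by `‖v‖ / W` gives a probability measure under which `Q_ef` is the mean of
`v ↦ s₀ (e ⊗ e - I/3)` with `e = v / ‖v‖`; since `v ≠ 0` almost surely, this map takes values in
`K = {s₀ (e ⊗ e - I/3) : ‖e‖ = 1}`, so `Q_ef` lies in the closed convex hull of `K`. A convex
function on the finite-dimensional space `Sym₀(3)` is continuous, hence bounded on that closed
hull by its supremum on `K`. Frame indifference makes `f` constant on `K`, because reflections
act transitively on the unit sphere. The eigenvalue and norm bounds follow the same way from the
linear functionals `Q ↦ ± xᵀ Q x` and the Frobenius norm, whose values on `K` are explicit.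
-/

open MeasureTheory Matrix

theorem ConvexOn.le_of_mem_closure_convexHull {E : Type*} [NormedAddCommGroup E]
    [NormedSpace ℝ E] [FiniteDimensional ℝ E] {S : Submodule ℝ E} {f : E → ℝ} {K : Set E}
    {c : ℝ} {x : E} (hf : ConvexOn ℝ S f) (hKS : K ⊆ S) (hfK : ∀ y ∈ K, f y ≤ c)
    (hx : x ∈ closure (convexHull ℝ K)) : f x ≤ c := by
  have hxS : x ∈ S :=
    closure_minimal (convexHull_min hKS S.convex) S.closed_of_finiteDimensional hx
  have hg : ConvexOn ℝ Set.univ (f ∘ S.subtype) :=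
    (hf.comp_linearMap S.subtype).subset (fun y _ => y.2) convex_univ
  have hgc : Continuous (f ∘ S.subtype) :=
    continuousOn_univ.1 (hg.continuousOn isOpen_univ)
  have hxK : (⟨x, hxS⟩ : S) ∈ closure (convexHull ℝ (Subtype.val ⁻¹' K)) := by
    rw [closure_subtype]
    convert hx using 2
    have hK : Subtype.val '' (Subtype.val ⁻¹' K : Set S) = K :=
      Set.image_preimage_eq_of_subset (by rwa [Subtype.range_coe])
    exact (S.subtype.image_convexHull _).trans (congrArg _ hK)
  refine closure_minimal (fun y hy => ?_) (isClosed_le hgc continuous_const) hxK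
  obtain ⟨z, hzK, hyz⟩ := hg.exists_ge_of_mem_convexHull (Set.subset_univ _) hy
  exact hyz.trans (hfK z hzK)

theorem inv_integral_smul_integral_smul_mem_closure_convexHull {α E : Type*}
    [MeasurableSpace α] [NormedAddCommGroup E] [NormedSpace ℝ E] [CompleteSpace E]
    {μ : Measure α} {w : α → ℝ} {g : α → E} {K : Set E}
    (hw : 0 ≤ᵐ[μ] w) (hwi : Integrable w μ) (hW : 0 < ∫ a, w a ∂μ)
    (hwg : Integrable (fun a => w a • g a) μ) (hgK : ∀ᵐ a ∂μ, g a ∈ K) :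
    (∫ a, w a ∂μ)⁻¹ • ∫ a, w a • g a ∂μ ∈ closure (convexHull ℝ K) := by
  set W := ∫ a, w a ∂μ
  set ρ : α → ENNReal := fun a => ENNReal.ofReal (w a / W)
  have hρ : AEMeasurable ρ μ := (hwi.aemeasurable.div_const W).ennreal_ofReal
  have hρ_fin : ∀ᵐ a ∂μ, ρ a < ⊤ := .of_forall fun _ => ENNReal.ofReal_lt_top
  have hρ_smul : (fun a => (ρ a).toReal • g a) =ᵐ[μ] fun a => W⁻¹ • w a • g a := by
    filter_upwards [hw] with a ha
    rw [ENNReal.toReal_ofReal (div_nonneg ha hW.le), smul_smul, div_eq_inv_mul]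
  have : IsProbabilityMeasure (μ.withDensity ρ) := by
    constructor
    rw [withDensity_apply _ .univ, Measure.restrict_univ,
      ← ofReal_integral_eq_lintegral_ofReal (hwi.div_const W)
        (hw.mono fun a ha => div_nonneg ha hW.le),
      integral_div, div_self hW.ne', ENNReal.ofReal_one]
  have hgi : Integrable g (μ.withDensity ρ) :=
    (integrable_withDensity_iff_integrable_smul₀' hρ hρ_fin).2
      ((hwg.smul W⁻¹).congr hρ_smul.symm)
  have hmean : ∫ a, g a ∂(μ.withDensity ρ) = W⁻¹ • ∫ a, w a • g a ∂μ := by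
    rw [integral_withDensity_eq_integral_toReal_smul₀ hρ hρ_fin, integral_congr_ae hρ_smul,
      integral_smul]
  rw [← hmean]
  exact Convex.integral_mem (convex_convexHull ℝ K).closure isClosed_closure
    ((withDensity_absolutelyContinuous μ ρ).ae_le
      (hgK.mono fun a ha => subset_closure (subset_convexHull ℝ K ha))) hgi

theorem integral_norm_pos {E : Type*} [NormedAddCommGroup E] [MeasurableSpace E]
    {μ : Measure E} [NeZero μ] (h0 : ∀ᵐ v ∂μ, v ≠ 0) (hint : Integrable (fun v => ‖v‖) μ) :
    0 < ∫ v, ‖v‖ ∂μ := by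
  refine (integral_nonneg fun v => norm_nonneg v).lt_of_ne' fun h => ?_
  obtain ⟨v, hv0, hv⟩ :=
    (h0.and ((integral_eq_zero_iff_of_nonneg (fun v => norm_nonneg v) hint).1 h)).exists
  exact hv0 (norm_eq_zero.1 hv)

theorem real_inner_sq_le_one_of_norm_eq_one {E : Type*} [NormedAddCommGroup E]
    [InnerProductSpace ℝ E] {x y : E} (hx : ‖x‖ = 1) (hy : ‖y‖ = 1) : inner ℝ x y ^ 2 ≤ 1 := by
  have h := abs_real_inner_le_norm x y
  rw [hx, hy, one_mul] at h
  exact (sq_le_one_iff_abs_le_one _).2 h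

theorem exists_mem_orthogonalGroup_mulVec_eq {ι : Type*} [Fintype ι] [DecidableEq ι]
    {x y : EuclideanSpace ℝ ι} (h : ‖x‖ = ‖y‖) :
    ∃ R ∈ orthogonalGroup ι ℝ, R *ᵥ ⇑x = ⇑y := by
  let b := (EuclideanSpace.basisFun ι ℝ).toBasis
  let ρ := Submodule.reflection (ℝ ∙ (x - y))ᗮ
  refine ⟨LinearMap.toMatrix b b ρ.toLinearEquiv.toLinearMap,
    ρ.toMatrix_mem_unitaryGroup _ _, ?_⟩
  have hρ := LinearMap.toMatrix_mulVec_repr b b ρ.toLinearEquiv.toLinearMap x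
  have hb : ∀ z, ⇑(b.repr z) = ⇑z := fun z => rfl
  rw [hb, hb] at hρ
  exact hρ.trans (congrArg _ (Submodule.reflection_sub h))

section
attribute [local instance] Matrix.frobeniusNormedAddCommGroup Matrix.frobeniusNormedSpace

theorem convexOn_sqrt_sum_sq {m n : Type*} [Fintype m] [Fintype n] :
    ConvexOn ℝ Set.univ fun Q : Matrix m n ℝ => √(∑ i, ∑ j, Q i j ^ 2) := by
  have h : (fun Q : Matrix m n ℝ => √(∑ i, ∑ j, Q i j ^ 2)) = (‖·‖) := by
    ext Q
    simp [frobenius_norm_def, Real.sqrt_eq_rpow]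
  rw [h]
  exact convexOn_univ_norm

end

def quadFormAt {n R : Type*} [Fintype n] [CommRing R] (x : n → R) : Matrix n n R →ₗ[R] R where
  toFun Q := ∑ i, ∑ j, x i * Q i j * x j
  map_add' A B := by simp only [Matrix.add_apply, mul_add, add_mul, Finset.sum_add_distrib]
  map_smul' c A := by
    simp only [Matrix.smul_apply, smul_eq_mul, RingHom.id_apply, Finset.mul_sum]
    exact Finset.sum_congr rfl fun i _ => Finset.sum_congr rfl fun j _ => by ring

def tracelessSymm (n R : Type*) [Fintype n] [CommRing R] : Submodule R (Matrix n n R) where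
  carrier := {Q | Qᵀ = Q ∧ Q.trace = 0}
  add_mem' ha hb := ⟨by rw [transpose_add, ha.1, hb.1], by rw [trace_add, ha.2, hb.2, add_zero]⟩
  zero_mem' := ⟨transpose_zero, trace_zero _ _⟩
  smul_mem' c _ ha := ⟨by rw [transpose_smul, ha.1], by rw [trace_smul, ha.2, smul_zero]⟩

/-- Valued in `Fin 3 → Fin 3 → ℝ` rather than in matrices, which carry no norm instance,
so that it can be integrated. -/
noncomputable def uniaxial (s : ℝ) (e : EuclideanSpace ℝ (Fin 3)) : Fin 3 → Fin 3 → ℝ :=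
  fun i j => s * (e i * e j - if i = j then (1 : ℝ) / 3 else 0)

theorem continuous_uniaxial (s : ℝ) : Continuous (uniaxial s) := by
  unfold uniaxial
  fun_prop

theorem norm_mul_uniaxial_inv_norm_smul (s : ℝ) (v : EuclideanSpace ℝ (Fin 3)) (i j : Fin 3) :
    ‖v‖ * uniaxial s (‖v‖⁻¹ • v) i j =
      s * ((v i * v j / ‖v‖ ^ 2 - if i = j then (1 : ℝ) / 3 else 0) * ‖v‖) := by
  simp only [uniaxial, PiLp.smul_apply, smul_eq_mul]
  ring

theorem of_uniaxial_eq_smul (s : ℝ) (e : EuclideanSpace ℝ (Fin 3)) :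
    of (uniaxial s e) = s • (vecMulVec ⇑e ⇑e - (1 / 3 : ℝ) • 1) := by
  ext i j
  simp [uniaxial, vecMulVec_apply, one_apply]

theorem conj_of_uniaxial {R : Matrix (Fin 3) (Fin 3) ℝ} (hR : R ∈ orthogonalGroup (Fin 3) ℝ)
    (s : ℝ) (e : EuclideanSpace ℝ (Fin 3)) :
    R * of (uniaxial s e) * Rᵀ = of (uniaxial s (WithLp.toLp 2 (R *ᵥ ⇑e))) := by
  have hRRt : R * Rᵀ = 1 := (mem_orthogonalGroup_iff _ _).1 hR
  simp only [of_uniaxial_eq_smul, Matrix.mul_smul, Matrix.smul_mul, Matrix.mul_sub,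
    Matrix.sub_mul, mul_vecMulVec, vecMulVec_mul, vecMul_transpose, Matrix.mul_one, hRRt]

theorem of_uniaxial_mem_tracelessSymm (s : ℝ) {e : EuclideanSpace ℝ (Fin 3)} (he : ‖e‖ = 1) :
    of (uniaxial s e) ∈ tracelessSymm (Fin 3) ℝ := by
  refine ⟨by ext i j; simp [uniaxial, mul_comm, eq_comm], ?_⟩
  have h := EuclideanSpace.real_norm_sq_eq e
  rw [he, Fin.sum_univ_three] at h
  simp only [trace, diag_apply, of_apply, uniaxial, ↓reduceIte, Fin.sum_univ_three]
  linear_combination s * h.symm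

theorem quadFormAt_of_uniaxial (s : ℝ) (x e : EuclideanSpace ℝ (Fin 3)) :
    quadFormAt ⇑x (of (uniaxial s e)) = s * (inner ℝ x e ^ 2 - ‖x‖ ^ 2 / 3) := by
  simp only [quadFormAt, LinearMap.coe_mk, AddHom.coe_mk, of_apply, uniaxial, Fin.sum_univ_three,
    Fin.reduceEq, ↓reduceIte, PiLp.inner_apply, RCLike.inner_apply, conj_trivial,
    EuclideanSpace.real_norm_sq_eq]
  ring

theorem sum_sq_uniaxial (s : ℝ) {e : EuclideanSpace ℝ (Fin 3)} (he : ‖e‖ = 1) :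
    ∑ i, ∑ j, uniaxial s e i j ^ 2 = s ^ 2 * (2 / 3) := by
  have h := EuclideanSpace.real_norm_sq_eq e
  rw [he, Fin.sum_univ_three] at h
  simp only [uniaxial, Fin.sum_univ_three, Fin.reduceEq, ↓reduceIte]
  linear_combination (s ^ 2 * (e 0 ^ 2 + e 1 ^ 2 + e 2 ^ 2 + 1 / 3)) * h.symm

theorem apply_of_uniaxial_eq {f : Matrix (Fin 3) (Fin 3) ℝ → ℝ}
    (hf : ∀ R ∈ orthogonalGroup (Fin 3) ℝ, ∀ Q : Matrix (Fin 3) (Fin 3) ℝ,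
      Qᵀ = Q → Q.trace = 0 → f (R * Q * Rᵀ) = f Q)
    (s : ℝ) {e e' : EuclideanSpace ℝ (Fin 3)} (he : ‖e‖ = 1) (he' : ‖e'‖ = 1) :
    f (of (uniaxial s e')) = f (of (uniaxial s e)) := by
  obtain ⟨R, hR, hRe⟩ := exists_mem_orthogonalGroup_mulVec_eq (he'.trans he.symm)
  have hmem := of_uniaxial_mem_tracelessSymm s he'
  rw [← hf R hR _ hmem.1 hmem.2, conj_of_uniaxial hR, hRe]

theorem le_of_forall_uniaxial_le {f : Matrix (Fin 3) (Fin 3) ℝ → ℝ}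
    (hf : ConvexOn ℝ (tracelessSymm (Fin 3) ℝ) f) {s c : ℝ} {Q : Matrix (Fin 3) (Fin 3) ℝ}
    (hQ : of.symm Q ∈ closure (convexHull ℝ (uniaxial s '' Metric.sphere 0 1)))
    (hc : ∀ e : EuclideanSpace ℝ (Fin 3), ‖e‖ = 1 → f (of (uniaxial s e)) ≤ c) : f Q ≤ c := by
  let L : (Fin 3 → Fin 3 → ℝ) →ₗ[ℝ] Matrix (Fin 3) (Fin 3) ℝ := (ofLinearEquiv ℝ).toLinearMap
  have hfL : ConvexOn ℝ ((tracelessSymm (Fin 3) ℝ).comap L : Set (Fin 3 → Fin 3 → ℝ)) (f ∘ L) :=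
    hf.comp_linearMap L
  refine hfL.le_of_mem_closure_convexHull ?_ ?_ hQ
  · rintro _ ⟨e, he, rfl⟩
    exact of_uniaxial_mem_tracelessSymm s (mem_sphere_zero_iff_norm.1 he)
  · rintro _ ⟨e, he, rfl⟩
    exact hc e (mem_sphere_zero_iff_norm.1 he)

theorem effectiveQ_mem_closure_convexHull (μ : Measure (EuclideanSpace ℝ (Fin 3))) [NeZero μ]
    (h0 : ∀ᵐ v ∂μ, v ≠ 0) (hint : Integrable (fun v => ‖v‖) μ) (s : ℝ)
    (Q : Matrix (Fin 3) (Fin 3) ℝ)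
    (hQ : ∀ i j, Q i j = (s / ∫ v, ‖v‖ ∂μ) *
      ∫ v, (v i * v j / ‖v‖ ^ 2 - (if i = j then (1 : ℝ) / 3 else 0)) * ‖v‖ ∂μ) :
    of.symm Q ∈ closure (convexHull ℝ (uniaxial s '' Metric.sphere 0 1)) := by
  set Ψ := fun v : EuclideanSpace ℝ (Fin 3) => uniaxial s (‖v‖⁻¹ • v)
  have hΨK : ∀ᵐ v ∂μ, Ψ v ∈ uniaxial s '' Metric.sphere 0 1 := by
    filter_upwards [h0] with v hv
    exact ⟨_, by simp [norm_smul, hv], rfl⟩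
  obtain ⟨C, hC⟩ :=
    ((isCompact_sphere 0 1).image (continuous_uniaxial s)).isBounded.exists_norm_le
  have hΨ_int : Integrable (fun v => ‖v‖ • Ψ v) μ :=
    hint.smul_bdd C ((continuous_uniaxial s).comp_aestronglyMeasurable (by fun_prop))
      (hΨK.mono fun v hv => hC _ hv)
  convert inv_integral_smul_integral_smul_mem_closure_convexHull
    (.of_forall fun v => norm_nonneg v) hint (integral_norm_pos h0 hint) hΨ_int hΨK
  ext i j
  rw [of_symm_apply, hQ, Pi.smul_apply, Pi.smul_apply, eval_integral hΨ_int.eval,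
    eval_integral (hΨ_int.eval i).eval]
  simp only [Ψ, Pi.smul_apply, smul_eq_mul, norm_mul_uniaxial_inv_norm_smul, integral_const_mul]
  ring

theorem stmt8_general (ν : EuclideanSpace ℝ (Fin 3))
    (μ : Measure (EuclideanSpace ℝ (Fin 3))) [IsProbabilityMeasure μ]
    (hsupp : ∀ᵐ v ∂μ, (inner ℝ v ν : ℝ) = 1)
    (hint : Integrable (fun v => ‖v‖) μ)
    (s₀ : ℝ) (hs₀ : 0 < s₀) (W : ℝ) (hW : W = ∫ v, ‖v‖ ∂μ)
    (Qef : Matrix (Fin 3) (Fin 3) ℝ)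
    (hQef : ∀ i j, Qef i j =
      (s₀ / W) * ∫ v, (v i * v j / ‖v‖ ^ 2 - (if i = j then (1 : ℝ) / 3 else 0)) * ‖v‖ ∂μ) :
    (∀ f : Matrix (Fin 3) (Fin 3) ℝ → ℝ,
      ConvexOn ℝ {Q : Matrix (Fin 3) (Fin 3) ℝ | Qᵀ = Q ∧ Matrix.trace Q = 0} f →
      (∀ R ∈ Matrix.orthogonalGroup (Fin 3) ℝ,
        ∀ Q : Matrix (Fin 3) (Fin 3) ℝ, Qᵀ = Q → Matrix.trace Q = 0 →
          f ((R : Matrix (Fin 3) (Fin 3) ℝ) * Q * (R : Matrix (Fin 3) (Fin 3) ℝ)ᵀ) = f Q) →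
      ∀ e : EuclideanSpace ℝ (Fin 3), ‖e‖ = 1 →
        f Qef ≤ f (Matrix.of fun i j => s₀ * (e i * e j - (if i = j then (1 : ℝ) / 3 else 0)))) ∧
    (∀ x : EuclideanSpace ℝ (Fin 3), ‖x‖ = 1 →
      (∑ i, ∑ j, x i * Qef i j * x j) ≤ 2 * s₀ / 3 ∧
      -(s₀ / 3) ≤ ∑ i, ∑ j, x i * Qef i j * x j) ∧
    Real.sqrt (∑ i, ∑ j, (Qef i j) ^ 2) ≤ s₀ * Real.sqrt (2 / 3) := by
  have hQ := effectiveQ_mem_closure_convexHull μ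
    (hsupp.mono fun v hv h => by simp [h] at hv) hint s₀ Qef (hW ▸ hQef)
  refine ⟨fun f hf hinv e he => ?_, fun x hx => ⟨?_, ?_⟩, ?_⟩
  · exact le_of_forall_uniaxial_le hf hQ fun e' he' => (apply_of_uniaxial_eq hinv s₀ he he').le
  · refine le_of_forall_uniaxial_le ((quadFormAt ⇑x).convexOn (tracelessSymm (Fin 3) ℝ).convex)
      hQ fun e he => ?_
    rw [quadFormAt_of_uniaxial, hx]
    nlinarith [real_inner_sq_le_one_of_norm_eq_one hx he]
  · refine neg_le.1 (le_of_forall_uniaxial_le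
      ((-quadFormAt ⇑x).convexOn (tracelessSymm (Fin 3) ℝ).convex) hQ fun e he => ?_)
    rw [LinearMap.neg_apply, quadFormAt_of_uniaxial, hx]
    nlinarith [sq_nonneg (inner ℝ x e)]
  · refine le_of_forall_uniaxial_le (convexOn_sqrt_sum_sq.subset (Set.subset_univ _)
      (tracelessSymm (Fin 3) ℝ).convex) hQ fun e he => ?_
    simp only [of_apply]
    rw [sum_sq_uniaxial s₀ he, Real.sqrt_mul (sq_nonneg s₀), Real.sqrt_sq hs₀.le]

/-- Jensen bound for the effective preferred Q-tensor: if μ is a probability measure on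
ℝ³ supported on ν + ν^⊥, W = ∫|v| dμ and
Q_ef = (s₀/W) ∫ (v⊗v/|v|² − I/3)|v| dμ(v), then for every convex frame-indifferent
f : Sym₀(3) → ℝ, f(Q_ef) ≤ f(s₀(e⊗e − I/3)) for any unit e; in particular
λ_max(Q_ef) ≤ 2s₀/3, λ_min(Q_ef) ≥ −s₀/3, and |Q_ef| ≤ s₀√(2/3). -/
theorem stmt8 (ν : EuclideanSpace ℝ (Fin 3)) (hν : ‖ν‖ = 1)
    (μ : Measure (EuclideanSpace ℝ (Fin 3))) [IsProbabilityMeasure μ]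
    (hsupp : ∀ᵐ v ∂μ, (inner ℝ v ν : ℝ) = 1)
    (hint : Integrable (fun v => ‖v‖) μ)
    (s₀ : ℝ) (hs₀ : 0 < s₀) (W : ℝ) (hW : W = ∫ v, ‖v‖ ∂μ)
    (Qef : Matrix (Fin 3) (Fin 3) ℝ)
    (hQef : ∀ i j, Qef i j =
      (s₀ / W) * ∫ v, (v i * v j / ‖v‖ ^ 2 - (if i = j then (1 : ℝ) / 3 else 0)) * ‖v‖ ∂μ) :
    (∀ f : Matrix (Fin 3) (Fin 3) ℝ → ℝ,
      ConvexOn ℝ {Q : Matrix (Fin 3) (Fin 3) ℝ | Qᵀ = Q ∧ Matrix.trace Q = 0} f →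
      (∀ R ∈ Matrix.orthogonalGroup (Fin 3) ℝ,
        ∀ Q : Matrix (Fin 3) (Fin 3) ℝ, Qᵀ = Q → Matrix.trace Q = 0 →
          f ((R : Matrix (Fin 3) (Fin 3) ℝ) * Q * (R : Matrix (Fin 3) (Fin 3) ℝ)ᵀ) = f Q) →
      ∀ e : EuclideanSpace ℝ (Fin 3), ‖e‖ = 1 →
        f Qef ≤ f (Matrix.of fun i j => s₀ * (e i * e j - (if i = j then (1 : ℝ) / 3 else 0)))) ∧
    (∀ x : EuclideanSpace ℝ (Fin 3), ‖x‖ = 1 →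
      (∑ i, ∑ j, x i * Qef i j * x j) ≤ 2 * s₀ / 3 ∧
      -(s₀ / 3) ≤ ∑ i, ∑ j, x i * Qef i j * x j) ∧
    Real.sqrt (∑ i, ∑ j, (Qef i j) ^ 2) ≤ s₀ * Real.sqrt (2 / 3) :=
  stmt8_general ν μ hsupp hint s₀ hs₀ W hW Qef hQef
end
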